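/- arXiv:1906.10053 — 3 statements merged into one kernel-verified Lean document; each statement's English description precedes it below -/
import Mathlib

section
/- Suppose G is convex and the block-coordinate forward-backward algorithm uses an essentially cyclic sampling with period T (each index is selected at least once in any window of T consecutive iterations). Then for every ν∈ℕ, φ_Γ(x^{T(ν+1)}) − φ_Γ(x^{Tν}) ≤ −(ξ_min/(2N(1+T·L_T)²))·‖z^{Tν} − x^{Tν}‖²_{Γ^{-1}}, where ξ_min = min_i (N − γ_i L_{f_i})/N and L_T is a Lipschitz constant of T in the norm ‖·‖_{Γ^{-1}}. -/
open Filter Topology Metric Bornology Set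
open scoped RealInnerProductSpace

noncomputable section

variable {N : ℕ} {E : Fin N → Type*}
  [∀ i, NormedAddCommGroup (E i)] [∀ i, InnerProductSpace ℝ (E i)]
  [∀ i, CompleteSpace (E i)]

/-- `F(x) = (1/N) ∑ᵢ fᵢ(xᵢ)`, the smooth separable part of the cost. -/
def Fsum (f : ∀ i, E i → ℝ) (x : PiLp 2 E) : ℝ := (N : ℝ)⁻¹ * ∑ i, f i (x i)

/-- `Φ = F + G`, the total cost, extended-real-valued. -/
def Phi (f : ∀ i, E i → ℝ) (G : PiLp 2 E → EReal) (x : PiLp 2 E) : EReal :=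
  ((Fsum f x : ℝ) : EReal) + G x

/-- The model `M(w,x) = F(x) + ⟨∇F(x),w-x⟩ + G(w) + ½‖w-x‖²_{Γ⁻¹}`, where `∇F(x)ᵢ = f'ᵢ(xᵢ)/N`
and `Γ = blockdiag(γ₁ I, …, γ_N I)`. -/
def Mdl (f : ∀ i, E i → ℝ) (f' : ∀ i, E i → E i) (γ : Fin N → ℝ)
    (G : PiLp 2 E → EReal) (w x : PiLp 2 E) : EReal :=
  ((Fsum f x + (N : ℝ)⁻¹ * ∑ i, ⟪f' i (x i), w i - x i⟫
      + 2⁻¹ * ∑ i, (γ i)⁻¹ * ‖w i - x i‖ ^ 2 : ℝ) : EReal) + G w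

/-- The forward-backward operator `T(x) = argmin_w M(w,x)`. -/
def Tmap (f : ∀ i, E i → ℝ) (f' : ∀ i, E i → E i) (γ : Fin N → ℝ)
    (G : PiLp 2 E → EReal) (x : PiLp 2 E) : Set (PiLp 2 E) :=
  {z | ∀ w, Mdl f f' γ G z x ≤ Mdl f f' γ G w x}

/-- The `Γ⁻¹`-proximal mapping
`prox_G^{Γ⁻¹}(u) = argmin_w { G(w) + ½‖w-u‖²_{Γ⁻¹} }`. -/
def proxSet (γ : Fin N → ℝ) (G : PiLp 2 E → EReal) (u : PiLp 2 E) : Set (PiLp 2 E) :=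
  {z | ∀ w, G z + ((2⁻¹ * ∑ i, (γ i)⁻¹ * ‖z i - u i‖ ^ 2 : ℝ) : EReal)
        ≤ G w + ((2⁻¹ * ∑ i, (γ i)⁻¹ * ‖w i - u i‖ ^ 2 : ℝ) : EReal)}

/-- The forward (gradient) step `x - Γ∇F(x)`. -/
def fwd (f' : ∀ i, E i → E i) (γ : Fin N → ℝ) (x : PiLp 2 E) : PiLp 2 E :=
  WithLp.toLp 2 (fun i => x i - (γ i * (N : ℝ)⁻¹) • f' i (x i))

/-- Convexity for an extended-real-valued function. -/
def ERealConvex {X : Type*} [AddCommMonoid X] [Module ℝ X] (G : X → EReal) : Prop :=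
  ∀ x y : X, ∀ a b : ℝ, 0 ≤ a → 0 ≤ b → a + b = 1 →
    G (a • x + b • y) ≤ (a : ℝ) * G x + (b : ℝ) * G y

/-- The regular (Fréchet) subdifferential `∂̂h(x)` of an extended-real-valued function. -/
def frechetSubdiff {X : Type*} [NormedAddCommGroup X] [InnerProductSpace ℝ X]
    (h : X → EReal) (x : X) : Set X :=
  {v | h x ≠ ⊤ ∧ h x ≠ ⊥ ∧ ∀ ε : ℝ, 0 < ε →
      ∀ᶠ w in 𝓝 x, h x + ((⟪v, w - x⟫ - ε * ‖w - x‖ : ℝ) : EReal) ≤ h w}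

/-- The limiting subdifferential `∂h(x)`. -/
def limitingSubdiff {X : Type*} [NormedAddCommGroup X] [InnerProductSpace ℝ X]
    (h : X → EReal) (x : X) : Set X :=
  {v | ∃ u w : ℕ → X, (∀ k, w k ∈ frechetSubdiff h (u k)) ∧
      Tendsto u atTop (𝓝 x) ∧ Tendsto (fun k => h (u k)) atTop (𝓝 (h x)) ∧
      Tendsto w atTop (𝓝 v)}

/-- The Kurdyka-Łojasiewicz property with exponent `θ` (at every point of `dom ∂h`),
with desingularizing function `ψ(s) = ϱ s^{1-θ}`. -/
def HasKLExponent {X : Type*} [NormedAddCommGroup X] [InnerProductSpace ℝ X]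
    (h : X → EReal) (θ : ℝ) : Prop :=
  ∀ xb : X, (limitingSubdiff h xb).Nonempty →
    ∃ ε η ϱ : ℝ, 0 < ε ∧ 0 < η ∧ 0 < ϱ ∧
      ∀ w : X, ‖w - xb‖ < ε → h xb < h w → h w < h xb + ((η : ℝ) : EReal) →
        ∀ v ∈ limitingSubdiff h w,
          1 ≤ ϱ * (1 - θ) * (h w - h xb).toReal ^ (-θ) * ‖v‖

/-! Every iteration is a descent step for the envelope: on an updated block `x_i^{k+1} = z_i^k`,
and the descent lemma for `f_i` gives `φ(x^{k+1}) ≤ φ(x^k) - (ξ_min/2) ‖x^{k+1} - x^k‖²_{Γ⁻¹}`, so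
over a window of `T` iterations `φ` decreases by `ξ_min/2` times the total squared movement.
Conversely, block `i` is first updated at some iteration `k + t` of the window, and until then `x_i`
has not moved, so `‖z_i^k - x_i^k‖ ≤ ‖z^k - z^{k+t}‖ + ‖z_i^{k+t} - x_i^{k+t}‖`. The Lipschitz
continuity of `T` and the triangle inequality bound the right side by `(1 + T L_T)` times the square
root of the total movement; summing over the `N` blocks gives the claim. -/

-- Along the segment, `t ↦ f (x + t • d) - t ⟪f' x, d⟫ - t² L ‖d‖² / 2` has nonpositive derivative.
theorem le_add_inner_add_of_lipschitz_gradient {F : Type*} [NormedAddCommGroup F]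
    [InnerProductSpace ℝ F] [CompleteSpace F] {f : F → ℝ} {f' : F → F} {L : ℝ}
    (hf : ∀ u, HasGradientAt f (f' u) u) (hlip : ∀ u v, ‖f' u - f' v‖ ≤ L * ‖u - v‖) (x y : F) :
    f y ≤ f x + ⟪f' x, y - x⟫ + L / 2 * ‖y - x‖ ^ 2 := by
  set d := y - x
  let g : ℝ → ℝ := fun t => f (x + t • d) - t * ⟪f' x, d⟫ - t ^ 2 * (L / 2 * ‖d‖ ^ 2)
  have hg : ∀ t, HasDerivAt g (⟪f' (x + t • d), d⟫ - ⟪f' x, d⟫ - 2 * t * (L / 2 * ‖d‖ ^ 2)) t := by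
    intro t
    have hline : HasDerivAt (fun t : ℝ => x + t • d) d t := by
      simpa using ((hasDerivAt_id t).smul_const d).const_add x
    have hfline := (hf (x + t • d)).hasFDerivAt.comp_hasDerivAt t hline
    simp only [InnerProductSpace.toDual_apply_apply] at hfline
    refine ((hfline.sub ((hasDerivAt_id t).mul_const ⟪f' x, d⟫)).sub
      ((hasDerivAt_pow 2 t).mul_const (L / 2 * ‖d‖ ^ 2))).congr_deriv ?_
    norm_num
  have hanti : AntitoneOn g (Icc 0 1) := by
    refine antitoneOn_of_deriv_nonpos (convex_Icc 0 1)
      (fun t _ => (hg t).continuousAt.continuousWithinAt)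
      (fun t _ => (hg t).differentiableAt.differentiableWithinAt) fun t ht => ?_
    rw [interior_Icc] at ht
    have hinc : ⟪f' (x + t • d) - f' x, d⟫ ≤ L * t * ‖d‖ ^ 2 :=
      calc ⟪f' (x + t • d) - f' x, d⟫ ≤ ‖f' (x + t • d) - f' x‖ * ‖d‖ := real_inner_le_norm _ _
        _ ≤ L * ‖t • d‖ * ‖d‖ := by
          gcongr
          simpa using hlip (x + t • d) x
        _ = L * t * ‖d‖ ^ 2 := by rw [norm_smul, Real.norm_of_nonneg ht.1.le]; ring
    rw [inner_sub_left] at hinc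
    rw [(hg t).deriv]
    linarith
  have h10 : g 1 ≤ g 0 :=
    hanti (left_mem_Icc.2 zero_le_one) (right_mem_Icc.2 zero_le_one) zero_le_one
  norm_num [g, d] at h10
  linarith

theorem sub_le_neg_mul_sum_range {a q : ℕ → ℝ} {c : ℝ} (h : ∀ k, a (k + 1) - a k ≤ -c * q k)
    (k m : ℕ) : a (k + m) - a k ≤ -c * ∑ t ∈ Finset.range m, q (k + t) := by
  have htel := Finset.sum_range_sub (fun t => a (k + t)) m
  simp only [add_zero, ← add_assoc] at htel
  rw [← htel, Finset.mul_sum]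
  exact Finset.sum_le_sum fun t _ => h (k + t)

section BlockUpdate

variable {ι : Type*} {β : ι → Type*} {u v : ℕ → PiLp 2 β} {I : ℕ → Finset ι}

theorem apply_add_eq_of_forall_not_mem [DecidableEq ι]
    (hup : ∀ k i, u (k + 1) i = if i ∈ I (k + 1) then v k i else u k i) {k t : ℕ} {i : ι}
    (h : ∀ s < t, i ∉ I (k + s + 1)) : u (k + t) i = u k i := by
  induction t with
  | zero => rfl
  | succ t ih =>
    rw [← add_assoc, hup, if_neg (h t t.lt_succ_self), ih fun s hs => h s (hs.trans t.lt_succ_self)]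

theorem dist_apply_le_of_first_selection [Fintype ι] [∀ i, SeminormedAddCommGroup (β i)]
    {LT D : ℝ} (hLT0 : 0 ≤ LT)
    (hv : ∀ j k, dist (v j) (v k) ≤ LT * dist (u j) (u k)) {k t : ℕ} {i : ι}
    (hfix : u (k + t) i = u k i) (hsel : u (k + t + 1) i = v (k + t) i)
    (hD : ∀ s ≤ t, dist (u (k + s + 1)) (u (k + s)) ≤ D) :
    dist (v k i) (u k i) ≤ (1 + t * LT) * D := by
  have hdrift : dist (u k) (u (k + t)) ≤ t * D := by
    simpa using dist_le_range_sum_of_dist_le (f := fun s => u (k + s)) (d := fun _ => D) t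
      fun hs => by rw [dist_comm]; exact hD _ hs.le
  have hlast : dist (v (k + t) i) (u k i) ≤ D := by
    rw [← hsel, ← hfix]
    exact (PiLp.dist_apply_le _ _ i).trans (hD t le_rfl)
  calc dist (v k i) (u k i) ≤ dist (v k i) (v (k + t) i) + dist (v (k + t) i) (u k i) :=
        dist_triangle _ _ _
    _ ≤ LT * (t * D) + D := by
        gcongr
        exact (PiLp.dist_apply_le _ _ i).trans ((hv k (k + t)).trans (by gcongr))
    _ = (1 + t * LT) * D := by ring

theorem sum_dist_apply_sq_le_window [Fintype ι] [DecidableEq ι]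
    [∀ i, SeminormedAddCommGroup (β i)] {T : ℕ} {LT : ℝ} (hLT0 : 0 ≤ LT)
    (hv : ∀ j k, dist (v j) (v k) ≤ LT * dist (u j) (u k))
    (hup : ∀ k i, u (k + 1) i = if i ∈ I (k + 1) then v k i else u k i)
    (hcyc : ∀ k i, ∃ t < T, i ∈ I (k + t + 1)) (k : ℕ) :
    ∑ i, dist (v k i) (u k i) ^ 2
      ≤ Fintype.card ι * (1 + T * LT) ^ 2 *
          ∑ t ∈ Finset.range T, dist (u (k + t + 1)) (u (k + t)) ^ 2 := by
  set Q := ∑ t ∈ Finset.range T, dist (u (k + t + 1)) (u (k + t)) ^ 2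
  have hQ : 0 ≤ Q := by positivity
  have hblock : ∀ i, dist (v k i) (u k i) ≤ (1 + T * LT) * √Q := by
    intro i
    obtain ⟨t₀, ht₀T, ht₀⟩ := hcyc k i
    have hselected : ∃ t, i ∈ I (k + t + 1) := ⟨t₀, ht₀⟩
    have htT : Nat.find hselected < T := (Nat.find_min' hselected ht₀).trans_lt ht₀T
    have hD : ∀ s ≤ Nat.find hselected, dist (u (k + s + 1)) (u (k + s)) ≤ √Q := fun s hs =>
      Real.le_sqrt_of_sq_le <|
        Finset.single_le_sum (f := fun t => dist (u (k + t + 1)) (u (k + t)) ^ 2)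
          (fun _ _ => by positivity) (Finset.mem_range.2 (hs.trans_lt htT))
    calc dist (v k i) (u k i) ≤ (1 + Nat.find hselected * LT) * √Q :=
          dist_apply_le_of_first_selection hLT0 hv
            (apply_add_eq_of_forall_not_mem hup fun s hs => Nat.find_min hselected hs)
            (by rw [hup, if_pos (Nat.find_spec hselected)]) hD
      _ ≤ (1 + T * LT) * √Q := by gcongr
  calc ∑ i, dist (v k i) (u k i) ^ 2 ≤ ∑ _i : ι, ((1 + T * LT) * √Q) ^ 2 :=
        Finset.sum_le_sum fun i _ => pow_le_pow_left₀ dist_nonneg (hblock i) 2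
    _ = Fintype.card ι * (1 + T * LT) ^ 2 * Q := by
        rw [Finset.sum_const, Finset.card_univ, nsmul_eq_mul, mul_pow, Real.sq_sqrt hQ, mul_assoc]

end BlockUpdate

section WeightedRescale

variable {ι : Type*} {β : ι → Type*} [∀ i, SeminormedAddCommGroup (β i)]
  [∀ i, NormedSpace ℝ (β i)] {c : ι → ℝ}

def weightedRescale (c : ι → ℝ) (u : PiLp 2 β) : PiLp 2 β :=
  WithLp.toLp 2 fun i => √(c i) • u i

theorem dist_weightedRescale_apply_sq (u v : PiLp 2 β) {i : ι} (hc : 0 ≤ c i) :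
    dist (weightedRescale c u i) (weightedRescale c v i) ^ 2 = c i * ‖u i - v i‖ ^ 2 := by
  simp [weightedRescale, dist_eq_norm, ← smul_sub, norm_smul, mul_pow, Real.sq_sqrt hc]

variable [Fintype ι]

theorem dist_weightedRescale_sq (hc : ∀ i, 0 ≤ c i) (u v : PiLp 2 β) :
    dist (weightedRescale c u) (weightedRescale c v) ^ 2 = ∑ i, c i * ‖u i - v i‖ ^ 2 := by
  rw [PiLp.dist_sq_eq_of_L2]
  exact Finset.sum_congr rfl fun i _ => dist_weightedRescale_apply_sq u v (hc i)

theorem dist_weightedRescale (hc : ∀ i, 0 ≤ c i) (u v : PiLp 2 β) :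
    dist (weightedRescale c u) (weightedRescale c v) = √(∑ i, c i * ‖u i - v i‖ ^ 2) := by
  rw [← dist_weightedRescale_sq hc, Real.sqrt_sq dist_nonneg]

theorem sum_weighted_residual_le_window [DecidableEq ι] (hc : ∀ i, 0 ≤ c i)
    {x z : ℕ → PiLp 2 β} {I : ℕ → Finset ι} {T : ℕ} {S : PiLp 2 β → PiLp 2 β} {LT : ℝ}
    (hLT0 : 0 ≤ LT)
    (hS : ∀ u v, √(∑ i, c i * ‖S u i - S v i‖ ^ 2) ≤ LT * √(∑ i, c i * ‖u i - v i‖ ^ 2))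
    (hz : ∀ k, z k = S (x k))
    (hup : ∀ k i, x (k + 1) i = if i ∈ I (k + 1) then z k i else x k i)
    (hcyc : ∀ k i, ∃ t < T, i ∈ I (k + t + 1)) (k : ℕ) :
    ∑ i, c i * ‖z k i - x k i‖ ^ 2
      ≤ Fintype.card ι * (1 + T * LT) ^ 2 *
          ∑ t ∈ Finset.range T, ∑ i, c i * ‖x (k + t + 1) i - x (k + t) i‖ ^ 2 := by
  have hwindow := sum_dist_apply_sq_le_window (u := fun k => weightedRescale c (x k))
    (v := fun k => weightedRescale c (z k)) (I := I) hLT0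
    (fun j k => by simpa only [dist_weightedRescale hc, hz] using hS _ _)
    (fun k i => by simp only [weightedRescale, PiLp.toLp_apply]; rw [hup]; split_ifs <;> rfl)
    hcyc k
  simpa only [dist_weightedRescale_apply_sq _ _ (hc _), dist_weightedRescale_sq hc] using hwindow

end WeightedRescale

theorem EReal.eq_coe_sub_of_coe_eq_coe_add {a b : ℝ} {g : EReal} (h : (a : EReal) = b + g) :
    g = ((a - b : ℝ) : EReal) := by
  induction g using EReal.rec with
  | bot => simp at h
  | coe g => norm_cast at h ⊢; linarith
  | top => simp at h

theorem model_term_le_of_eq_or_eq {F : Type*} [NormedAddCommGroup F] [InnerProductSpace ℝ F]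
    [CompleteSpace F] {f : F → ℝ} {f' : F → F} {L n γ ξ : ℝ}
    (hf : ∀ u, HasGradientAt f (f' u) u) (hlip : ∀ u v, ‖f' u - f' v‖ ≤ L * ‖u - v‖)
    (hn : 0 < n) (hγ : 0 < γ) (hξ : ξ ≤ (n - γ * L) / n) {x z x' : F} (hx' : x' = z ∨ x' = x) :
    n⁻¹ * f x' + n⁻¹ * ⟪f' x', z - x'⟫ + 2⁻¹ * (γ⁻¹ * ‖z - x'‖ ^ 2)
      ≤ n⁻¹ * f x + n⁻¹ * ⟪f' x, z - x⟫ + 2⁻¹ * (γ⁻¹ * ‖z - x‖ ^ 2)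
        - ξ / 2 * (γ⁻¹ * ‖x' - x‖ ^ 2) := by
  rcases hx' with rfl | rfl
  · have hcoef : ξ * γ⁻¹ ≤ γ⁻¹ - n⁻¹ * L :=
      calc ξ * γ⁻¹ ≤ (n - γ * L) / n * γ⁻¹ := by gcongr
        _ = γ⁻¹ - n⁻¹ * L := by field_simp
    have hdesc := mul_le_mul_of_nonneg_left (le_add_inner_add_of_lipschitz_gradient hf hlip x x')
      (inv_nonneg.2 hn.le)
    have := mul_le_mul_of_nonneg_right hcoef (sq_nonneg ‖x' - x‖)
    rw [sub_self, inner_zero_right, norm_zero]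
    nlinarith
  · simp

section ForwardBackwardEnvelope

variable {n : ℕ} {X : Fin n → Type*} [∀ i, NormedAddCommGroup (X i)]
  [∀ i, InnerProductSpace ℝ (X i)]

-- `Mdl f f' γ G w x` unfolds to `smoothModel f f' γ w x + G w`.
def smoothModel (f : ∀ i, X i → ℝ) (f' : ∀ i, X i → X i) (γ : Fin n → ℝ) (w x : PiLp 2 X) : ℝ :=
  Fsum f x + (n : ℝ)⁻¹ * ∑ i, ⟪f' i (x i), w i - x i⟫ + 2⁻¹ * ∑ i, (γ i)⁻¹ * ‖w i - x i‖ ^ 2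

variable {f : ∀ i, X i → ℝ} {f' : ∀ i, X i → X i} {γ : Fin n → ℝ}

theorem smoothModel_eq_sum (w x : PiLp 2 X) :
    smoothModel f f' γ w x = ∑ i, ((n : ℝ)⁻¹ * f i (x i) + (n : ℝ)⁻¹ * ⟪f' i (x i), w i - x i⟫
      + 2⁻¹ * ((γ i)⁻¹ * ‖w i - x i‖ ^ 2)) := by
  simp only [smoothModel, Fsum, Finset.mul_sum, Finset.sum_add_distrib]

theorem fbe_sub_le_smoothModel_sub {G : PiLp 2 X → EReal} {φ : PiLp 2 X → ℝ}
    (hφ : ∀ x, ((φ x : ℝ) : EReal) = ⨅ w, Mdl f f' γ G w x) {x z : PiLp 2 X}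
    (hz : z ∈ Tmap f f' γ G x) (x' : PiLp 2 X) :
    φ x' - φ x ≤ smoothModel f f' γ z x' - smoothModel f f' γ z x := by
  have hx : ((φ x : ℝ) : EReal) = smoothModel f f' γ z x + G z :=
    (hφ x).trans (le_antisymm (iInf_le _ z) (le_iInf hz))
  have hx' : ((φ x' : ℝ) : EReal) ≤ smoothModel f f' γ z x' + G z :=
    (hφ x').trans_le (iInf_le _ z)
  rw [EReal.eq_coe_sub_of_coe_eq_coe_add hx, ← EReal.coe_add, EReal.coe_le_coe_iff] at hx'
  linarith

theorem fbe_sub_le_of_block_update [∀ i, CompleteSpace (X i)] {L : Fin n → ℝ}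
    {G : PiLp 2 X → EReal} {φ : PiLp 2 X → ℝ}
    (hf : ∀ i (u : X i), HasGradientAt (f i) (f' i u) u)
    (hlip : ∀ i (u v : X i), ‖f' i u - f' i v‖ ≤ L i * ‖u - v‖) (hγ : ∀ i, 0 < γ i)
    (hφ : ∀ x, ((φ x : ℝ) : EReal) = ⨅ w, Mdl f f' γ G w x)
    {ξ : ℝ} (hξ : ∀ i, ξ ≤ ((n : ℝ) - γ i * L i) / n) {x z x' : PiLp 2 X}
    (hz : z ∈ Tmap f f' γ G x) (hx' : ∀ i, x' i = z i ∨ x' i = x i) :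
    φ x' - φ x ≤ -(ξ / 2) * ∑ i, (γ i)⁻¹ * ‖x' i - x i‖ ^ 2 := by
  have hmodel : smoothModel f f' γ z x'
      ≤ smoothModel f f' γ z x - ξ / 2 * ∑ i, (γ i)⁻¹ * ‖x' i - x i‖ ^ 2 := by
    rw [smoothModel_eq_sum, smoothModel_eq_sum, Finset.mul_sum, ← Finset.sum_sub_distrib]
    exact Finset.sum_le_sum fun i _ => model_term_le_of_eq_or_eq (hf i) (hlip i)
      (Nat.cast_pos.2 i.pos) (hγ i) (hξ i) (hx' i)
  linarith [fbe_sub_le_smoothModel_sub hφ hz x']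

end ForwardBackwardEnvelope

theorem bc_essentially_cyclic_descent_general (hN : 0 < N)
    (f : ∀ i, E i → ℝ) (f' : ∀ i, E i → E i) (L γ : Fin N → ℝ)
    (G : PiLp 2 E → EReal)
    (hf : ∀ i (u : E i), HasGradientAt (f i) (f' i u) u)
    (hlip : ∀ i (u v : E i), ‖f' i u - f' i v‖ ≤ L i * ‖u - v‖)
    (hγ : ∀ i, 0 < γ i) (hγL : ∀ i, γ i * L i < (N : ℝ))
    (φ : PiLp 2 E → ℝ)
    (hφ : ∀ x, ((φ x : ℝ) : EReal) = ⨅ w, Mdl f f' γ G w x)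
    (T : ℕ)
    (x z : ℕ → PiLp 2 E) (I : ℕ → Finset (Fin N))
    (hz : ∀ k, z k ∈ Tmap f f' γ G (x k))
    (hup : ∀ (k : ℕ) (i : Fin N), x (k + 1) i = if i ∈ I (k + 1) then z k i else x k i)
    (hcyc : ∀ (k : ℕ) (i : Fin N), ∃ t : ℕ, t < T ∧ i ∈ I (k + t + 1))
    (Tf : PiLp 2 E → PiLp 2 E) (hTf : ∀ u, Tmap f f' γ G u = {Tf u})
    (LT : ℝ) (hLT0 : 0 ≤ LT)
    (hLT : ∀ u v : PiLp 2 E,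
        Real.sqrt (∑ i, (γ i)⁻¹ * ‖Tf u i - Tf v i‖ ^ 2)
          ≤ LT * Real.sqrt (∑ i, (γ i)⁻¹ * ‖u i - v i‖ ^ 2)) :
    ∀ ν : ℕ,
      φ (x (T * (ν + 1))) - φ (x (T * ν))
        ≤ -((Finset.univ.inf' (Finset.univ_nonempty_iff.mpr ⟨⟨0, hN⟩⟩)
              (fun i => ((N : ℝ) - γ i * L i) / (N : ℝ)))
            / (2 * (N : ℝ) * (1 + (T : ℝ) * LT) ^ 2))
          * ∑ i, (γ i)⁻¹ * ‖z (T * ν) i - x (T * ν) i‖ ^ 2 := by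
  intro ν
  set ξ := Finset.univ.inf' _ fun i => ((N : ℝ) - γ i * L i) / N
  have hξ : ∀ i, ξ ≤ ((N : ℝ) - γ i * L i) / N := fun i => Finset.inf'_le _ (Finset.mem_univ i)
  have hξ0 : 0 ≤ ξ := (Finset.le_inf'_iff _ _).2 fun i _ =>
    div_nonneg (sub_nonneg.2 (hγL i).le) (Nat.cast_nonneg N)
  have hstep : ∀ k,
      φ (x (k + 1)) - φ (x k) ≤ -(ξ / 2) * ∑ i, (γ i)⁻¹ * ‖x (k + 1) i - x k i‖ ^ 2 :=
    fun k => fbe_sub_le_of_block_update hf hlip hγ hφ hξ (hz k) fun i => by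
      rw [hup]; split_ifs <;> simp
  have hdescent := sub_le_neg_mul_sum_range (a := fun k => φ (x k))
    (q := fun k => ∑ i, (γ i)⁻¹ * ‖x (k + 1) i - x k i‖ ^ 2) hstep (T * ν) T
  have hresidual := sum_weighted_residual_le_window (fun i => (inv_pos.2 (hγ i)).le) hLT0 hLT
    (fun k => by simpa [hTf] using hz k) hup hcyc (T * ν)
  rw [Fintype.card_fin] at hresidual
  set window := ∑ t ∈ Finset.range T, ∑ i, (γ i)⁻¹ * ‖x (T * ν + t + 1) i - x (T * ν + t) i‖ ^ 2
  have hc : 0 < 1 + T * LT := by positivity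
  have hcompare : ξ / (2 * N * (1 + T * LT) ^ 2) * ∑ i, (γ i)⁻¹ * ‖z (T * ν) i - x (T * ν) i‖ ^ 2
      ≤ ξ / 2 * window :=
    calc _ ≤ ξ / (2 * N * (1 + T * LT) ^ 2) * (N * (1 + T * LT) ^ 2 * window) := by gcongr
      _ = ξ / 2 * window := by field_simp
  rw [mul_add_one]
  linarith

/-- inequality (3.13): under essentially cyclic sampling with period T
and convex G, φ_Γ(x^{T(ν+1)}) - φ_Γ(x^{Tν}) ≤ -(ξ_min/(2N(1+T·L_T)²))‖z^{Tν}-x^{Tν}‖²_{Γ⁻¹},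
with L_T a ‖·‖_{Γ⁻¹}-Lipschitz constant of the (single-valued) operator T. -/
theorem bc_essentially_cyclic_descent (hN : 0 < N)
    (f : ∀ i, E i → ℝ) (f' : ∀ i, E i → E i) (L γ : Fin N → ℝ)
    (G : PiLp 2 E → EReal)
    (hf : ∀ i (u : E i), HasGradientAt (f i) (f' i u) u)
    (hL : ∀ i, 0 ≤ L i)
    (hlip : ∀ i (u v : E i), ‖f' i u - f' i v‖ ≤ L i * ‖u - v‖)
    (hγ : ∀ i, 0 < γ i) (hγL : ∀ i, γ i * L i < (N : ℝ))
    (hGlsc : LowerSemicontinuous G)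
    (hGproper : ∃ w, G w ≠ ⊤) (hGbot : ∀ w, G w ≠ ⊥)
    (hargmin : ∃ xs : PiLp 2 E, ∀ w, Phi f G xs ≤ Phi f G w)
    (φ : PiLp 2 E → ℝ)
    (hφ : ∀ x, ((φ x : ℝ) : EReal) = ⨅ w, Mdl f f' γ G w x)
    (hGconv : ERealConvex G)
    (T : ℕ) (hT1 : 1 ≤ T)
    (x z : ℕ → PiLp 2 E) (I : ℕ → Finset (Fin N))
    (hz : ∀ k, z k ∈ Tmap f f' γ G (x k))
    (hup : ∀ (k : ℕ) (i : Fin N), x (k + 1) i = if i ∈ I (k + 1) then z k i else x k i)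
    (hcyc : ∀ (k : ℕ) (i : Fin N), ∃ t : ℕ, t < T ∧ i ∈ I (k + t + 1))
    (Tf : PiLp 2 E → PiLp 2 E) (hTf : ∀ u, Tmap f f' γ G u = {Tf u})
    (LT : ℝ) (hLT0 : 0 ≤ LT)
    (hLT : ∀ u v : PiLp 2 E,
        Real.sqrt (∑ i, (γ i)⁻¹ * ‖Tf u i - Tf v i‖ ^ 2)
          ≤ LT * Real.sqrt (∑ i, (γ i)⁻¹ * ‖u i - v i‖ ^ 2)) :
    ∀ ν : ℕ,
      φ (x (T * (ν + 1))) - φ (x (T * ν))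
        ≤ -((Finset.univ.inf' (Finset.univ_nonempty_iff.mpr ⟨⟨0, hN⟩⟩)
              (fun i => ((N : ℝ) - γ i * L i) / (N : ℝ)))
            / (2 * (N : ℝ) * (1 + (T : ℝ) * LT) ^ 2))
          * ∑ i, (γ i)⁻¹ * ‖z (T * ν) i - x (T * ν) i‖ ^ 2 :=
  bc_essentially_cyclic_descent_general hN f f' L γ G hf hlip hγ hγL φ hφ T x z I hz hup hcyc Tf hTf
    LT hLT0 hLT
end
end

section
/- Let g:ℝ^n→ℝ∪{∞} be proper and lsc, let C = {x∈ℝ^{Nn} : x_1 = x_2 = ⋯ = x_N} be the consensus set, and define G(x) = (1/N)∑_{i=1}^N g(x_i) + δ_C(x). Given γ_i>0, let Γ = blockdiag(γ_1 I_n,…,γ_N I_n) and γ̂ = (∑_{i=1}^N γ_i^{-1})^{-1}. Then for every u∈ℝ^{Nn}, prox_G^{Γ^{-1}}(u) = {(v̂,…,v̂) : v̂ ∈ prox_{γ̂ g}(û)}, where û = γ̂·∑_{i=1}^N γ_i^{-1} u_i. -/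
open Filter Topology Metric Bornology Set
open scoped RealInnerProductSpace

noncomputable section

variable {N : ℕ} {E : Fin N → Type*}
  [∀ i, NormedAddCommGroup (E i)] [∀ i, InnerProductSpace ℝ (E i)]

/-!
Off the consensus set the prox objective is `+∞`, while at a consensus point `(v, …, v)` it equals
`g v + ½ ∑ᵢ γᵢ⁻¹ ‖v - uᵢ‖²`. Completing the square, `½ ∑ᵢ γᵢ⁻¹ ‖v - uᵢ‖² = (2γ̂)⁻¹ ‖v - û‖²` plus a
constant independent of `v`, so minimizing over consensus points is exactly the `γ̂`-prox of `g`
at the weighted mean `û`.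
-/

theorem EReal.coe_inv_natCast_mul_natCast_mul {n : ℕ} (hn : n ≠ 0) (a : EReal) :
    (((n : ℝ)⁻¹ : ℝ) : EReal) * (n * a) = a := by
  rw [← EReal.coe_coe_eq_natCast, ← mul_assoc, ← EReal.coe_mul,
    inv_mul_cancel₀ (Nat.cast_ne_zero.mpr hn), EReal.coe_one, one_mul]

theorem EReal.sum_ne_bot {ι : Type*} {s : Finset ι} {f : ι → EReal} (hf : ∀ i ∈ s, f i ≠ ⊥) :
    ∑ i ∈ s, f i ≠ ⊥ :=
  Finset.sum_induction f (· ≠ ⊥) (fun _ _ ha hb => EReal.add_ne_bot_iff.mpr ⟨ha, hb⟩)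
    EReal.zero_ne_bot hf

theorem EReal.coe_mul_ne_bot_of_nonneg {r : ℝ} (hr : 0 ≤ r) {x : EReal} (hx : x ≠ ⊥) :
    (r : EReal) * x ≠ ⊥ :=
  (EReal.mul_ne_bot _ _).mpr
    ⟨.inl (EReal.coe_ne_bot r), .inr hx, .inl (EReal.coe_ne_top r), .inl (EReal.coe_nonneg.mpr hr)⟩

theorem sum_mul_norm_sub_sq_eq {ι H : Type*} [Fintype ι] [NormedAddCommGroup H]
    [InnerProductSpace ℝ H] (c : ι → ℝ) (u : ι → H) {s : ℝ} (hs : ∑ i, c i = s) {m : H}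
    (hm : s • m = ∑ i, c i • u i) (v : H) :
    ∑ i, c i * ‖v - u i‖ ^ 2 = s * ‖v - m‖ ^ 2 + (∑ i, c i * ‖u i‖ ^ 2 - s * ‖m‖ ^ 2) := by
  have hinner : ∑ i, c i * ⟪v, u i⟫ = s * ⟪v, m⟫ := by
    simp only [← real_inner_smul_right, ← inner_sum, hm]
  have hterm : ∀ i, c i * ‖v - u i‖ ^ 2 = c i * ‖v‖ ^ 2 - 2 * (c i * ⟪v, u i⟫) + c i * ‖u i‖ ^ 2 :=
    fun i => by rw [norm_sub_sq_real]; ring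
  rw [Finset.sum_congr rfl fun i _ => hterm i, Finset.sum_add_distrib, Finset.sum_sub_distrib,
    ← Finset.sum_mul, hs, ← Finset.mul_sum, hinner, norm_sub_sq_real]
  ring

theorem isMinOn_univ_iff_of_eq_top_off_range {X Y : Type*} {F : X → EReal} {φ : Y → EReal}
    {e : Y → X} {c : ℝ} (hFe : ∀ y, F (e y) = φ y + c) (hF : ∀ x ∉ range e, F x = ⊤)
    (hφ : ∃ y, φ y ≠ ⊤) {z : X} : IsMinOn F univ z ↔ ∃ y, IsMinOn φ univ y ∧ e y = z := by
  simp only [isMinOn_univ_iff]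
  constructor
  · intro hz
    obtain ⟨y₀, hy₀⟩ := hφ
    obtain ⟨y, rfl⟩ : z ∈ range e := by
      by_contra hz'
      have := hz (e y₀)
      rw [hF z hz', top_le_iff, hFe] at this
      exact EReal.add_ne_top hy₀ (EReal.coe_ne_top c) this
    refine ⟨y, fun y' => ?_, rfl⟩
    simpa only [hFe, (EReal.addLECancellable_coe c).add_le_add_iff_right] using hz (e y')
  · rintro ⟨y, hy, rfl⟩ x
    by_cases hx : x ∈ range e
    · obtain ⟨y', rfl⟩ := hx
      rw [hFe, hFe]
      gcongr
      exact hy y'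
    · rw [hF x hx]
      exact le_top

section Consensus

variable {N : ℕ} {H : Type*}

open Classical in
def consensusAvg (g : H → EReal) (x : PiLp 2 (fun _ : Fin N => H)) : EReal :=
  (((N : ℝ)⁻¹ : ℝ) : EReal) * (∑ i, g (x i)) + (if ∀ i j : Fin N, x i = x j then 0 else ⊤)

theorem consensusAvg_toLp_const [NeZero N] (g : H → EReal) (v : H) :
    consensusAvg g (WithLp.toLp 2 fun _ : Fin N => v) = g v := by
  simp [consensusAvg, EReal.coe_inv_natCast_mul_natCast_mul (NeZero.ne N)]

theorem consensusAvg_eq_top {g : H → EReal} (hg : ∀ v, g v ≠ ⊥)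
    {x : PiLp 2 (fun _ : Fin N => H)} (hx : ¬ ∀ i j, x i = x j) : consensusAvg g x = ⊤ := by
  rw [consensusAvg, if_neg hx]
  exact EReal.add_top_of_ne_bot <| EReal.coe_mul_ne_bot_of_nonneg (by positivity) <|
    EReal.sum_ne_bot fun i _ => hg (x i)

end Consensus

theorem PiLp.mem_range_toLp_const_of_forall_eq {ι H : Type*} [Nonempty ι] {p : ENNReal}
    {x : PiLp p (fun _ : ι => H)} (hx : ∀ i j, x i = x j) :
    x ∈ range fun v => WithLp.toLp p fun _ : ι => v :=
  ⟨x (Classical.arbitrary ι), by ext i; exact hx _ i⟩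

open Classical in
theorem prox_consensus_formula_general {N : ℕ} (hN : 0 < N)
    {H : Type*} [NormedAddCommGroup H] [InnerProductSpace ℝ H]
    (g : H → EReal)
    (hgproper : ∃ u, g u ≠ ⊤) (hgbot : ∀ u, g u ≠ ⊥)
    (γ : Fin N → ℝ) (hγ : ∀ i, 0 < γ i)
    (u : PiLp 2 (fun _ : Fin N => H)) :
    proxSet γ
        (fun x : PiLp 2 (fun _ : Fin N => H) =>
          (((N : ℝ)⁻¹ : ℝ) : EReal) * (∑ i, g (x i)) +
            (if ∀ i j : Fin N, x i = x j then (0 : EReal) else ⊤)) u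
      = {x : PiLp 2 (fun _ : Fin N => H) | ∃ v : H,
          (∀ w : H,
            g v + (((2 * (∑ i, (γ i)⁻¹)⁻¹)⁻¹
                * ‖v - (∑ i, (γ i)⁻¹)⁻¹ • (∑ i, (γ i)⁻¹ • u i)‖ ^ 2 : ℝ) : EReal)
              ≤ g w + (((2 * (∑ i, (γ i)⁻¹)⁻¹)⁻¹
                * ‖w - (∑ i, (γ i)⁻¹)⁻¹ • (∑ i, (γ i)⁻¹ • u i)‖ ^ 2 : ℝ) : EReal)) ∧
          ∀ i : Fin N, x i = v} := by
  have : NeZero N := ⟨hN.ne'⟩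
  set s := ∑ i, (γ i)⁻¹
  set m := s⁻¹ • ∑ i, (γ i)⁻¹ • u i
  have hs : s ≠ 0 := (Finset.sum_pos (fun i _ => inv_pos.mpr (hγ i)) Finset.univ_nonempty).ne'
  have hquad (v : H) : 2⁻¹ * ∑ i, (γ i)⁻¹ * ‖v - u i‖ ^ 2 = (2 * s⁻¹)⁻¹ * ‖v - m‖ ^ 2
      + 2⁻¹ * (∑ i, (γ i)⁻¹ * ‖u i‖ ^ 2 - s * ‖m‖ ^ 2) := by
    rw [sum_mul_norm_sub_sq_eq _ _ rfl (smul_inv_smul₀ hs _), mul_inv, inv_inv]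
    ring
  ext z
  have key := isMinOn_univ_iff_of_eq_top_off_range
    (F := fun x => consensusAvg g x + ((2⁻¹ * ∑ i, (γ i)⁻¹ * ‖x i - u i‖ ^ 2 : ℝ) : EReal))
    (φ := fun v => g v + (((2 * s⁻¹)⁻¹ * ‖v - m‖ ^ 2 : ℝ) : EReal))
    (e := fun v => WithLp.toLp 2 fun _ : Fin N => v)
    (c := 2⁻¹ * (∑ i, (γ i)⁻¹ * ‖u i‖ ^ 2 - s * ‖m‖ ^ 2))
    (fun v => by simp only [consensusAvg_toLp_const, hquad, EReal.coe_add, add_assoc])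
    (fun x hx => by
      rw [consensusAvg_eq_top hgbot (mt PiLp.mem_range_toLp_const_of_forall_eq hx),
        EReal.top_add_coe])
    (hgproper.imp fun v hv => EReal.add_ne_top hv (EReal.coe_ne_top _)) (z := z)
  simp only [isMinOn_univ_iff] at key
  refine key.trans (exists_congr fun v => and_congr_right' ?_)
  simp only [WithLp.ext_iff, funext_iff, eq_comm]

open Classical in
/-- Lemma 4.1: for G(x) = (1/N)∑ᵢ g(xᵢ) + δ_C(x) with C the consensus set,
prox_G^{Γ⁻¹}(u) = {(v̂,…,v̂) : v̂ ∈ prox_{γ̂g}(û)} with γ̂ = (∑ᵢγᵢ⁻¹)⁻¹ and û = γ̂∑ᵢγᵢ⁻¹uᵢ. -/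
theorem prox_consensus_formula {N : ℕ} (hN : 0 < N)
    {H : Type*} [NormedAddCommGroup H] [InnerProductSpace ℝ H]
    (g : H → EReal) (hglsc : LowerSemicontinuous g)
    (hgproper : ∃ u, g u ≠ ⊤) (hgbot : ∀ u, g u ≠ ⊥)
    (γ : Fin N → ℝ) (hγ : ∀ i, 0 < γ i)
    (u : PiLp 2 (fun _ : Fin N => H)) :
    proxSet γ
        (fun x : PiLp 2 (fun _ : Fin N => H) =>
          (((N : ℝ)⁻¹ : ℝ) : EReal) * (∑ i, g (x i)) +
            (if ∀ i j : Fin N, x i = x j then (0 : EReal) else ⊤)) u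
      = {x : PiLp 2 (fun _ : Fin N => H) | ∃ v : H,
          (∀ w : H,
            g v + (((2 * (∑ i, (γ i)⁻¹)⁻¹)⁻¹
                * ‖v - (∑ i, (γ i)⁻¹)⁻¹ • (∑ i, (γ i)⁻¹ • u i)‖ ^ 2 : ℝ) : EReal)
              ≤ g w + (((2 * (∑ i, (γ i)⁻¹)⁻¹)⁻¹
                * ‖w - (∑ i, (γ i)⁻¹)⁻¹ • (∑ i, (γ i)⁻¹ • u i)‖ ^ 2 : ℝ) : EReal)) ∧
          ∀ i : Fin N, x i = v} :=
  prox_consensus_formula_general hN g hgproper hgbot γ hγ u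
end
end

section
/- Let f_i:ℝ^n→ℝ be differentiable, i=1,…,N, let g:ℝ^n→ℝ∪{∞} be proper, convex and lsc, let φ(x) = (1/N)∑_{i=1}^N f_i(x) + g(x) on ℝ^n, and let Φ(x_1,…,x_N) = (1/N)∑_{i=1}^N f_i(x_i) + (1/N)∑_{i=1}^N g(x_i) + δ_C(x_1,…,x_N) on ℝ^{Nn}, where C is the consensus set {x : x_1=⋯=x_N}. Then there exists a constant c>0 (independent of x, coming from the equivalence of the norms ‖w‖ and ∑_i‖w_i‖ on ℝ^{Nn}) such that dist(0, ∂Φ(x,…,x)) ≥ c·dist(0, ∂φ(x)) for every x∈ℝ^n, where ∂ denotes the limiting subdifferential. -/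
open Filter Topology Metric Bornology Set
open scoped RealInnerProductSpace

noncomputable section

variable {N : ℕ} {E : Fin N → Type*}
  [∀ i, NormedAddCommGroup (E i)] [∀ i, InnerProductSpace ℝ (E i)]

/-! The diagonal map `e : x ↦ (x, …, x)` is a linear embedding with continuous left inverse
`w ↦ w₀`, `Φ ∘ e = φ`, and `Φ = ⊤` off the range of `e`. For such a composition, Fréchet and
hence limiting subgradients `v` of `Φ` at `e x` give subgradients `∑ᵢ vᵢ` (the adjoint of `e`
applied to `v`) of `φ` at `x`, and conversely each subgradient `s` of `φ` lifts to the subgradient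
`e (s / N)` of `Φ`. So `∂Φ(x, …, x)` is empty only if `∂φ(x)` is, and
`dist(0, ∂φ(x)) ≤ ‖∑ᵢ vᵢ‖ ≤ √N ‖v‖` for every `v ∈ ∂Φ(x, …, x)`, which gives `c = 1 / √N`. -/

section Composition

variable {X Y : Type*} [NormedAddCommGroup X] [InnerProductSpace ℝ X]
  [NormedAddCommGroup Y] [InnerProductSpace ℝ Y] {h : Y → EReal}

theorem mem_frechetSubdiff_comp_of_mem (e : X →L[ℝ] Y) {x u : X} {v : Y}
    (hvu : ∀ a, ⟪v, e a⟫ = ⟪u, a⟫) (hv : v ∈ frechetSubdiff h (e x)) :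
    u ∈ frechetSubdiff (h ∘ e) x := by
  obtain ⟨hT, hB, hv⟩ := hv
  refine ⟨hT, hB, fun ε hε => ?_⟩
  filter_upwards [e.continuous.continuousAt.eventually (hv (ε / (‖e‖ + 1)) (by positivity))]
    with z hz
  rw [← map_sub, hvu] at hz
  refine le_trans (add_le_add_right (EReal.coe_le_coe_iff.mpr ?_) _) hz
  have : ε / (‖e‖ + 1) * ‖e (z - x)‖ ≤ ε * ‖z - x‖ :=
    calc ε / (‖e‖ + 1) * ‖e (z - x)‖ ≤ ε / (‖e‖ + 1) * ((‖e‖ + 1) * ‖z - x‖) := by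
          gcongr
          exact (e.le_opNorm _).trans (by nlinarith [norm_nonneg (z - x)])
      _ = ε * ‖z - x‖ := by field_simp
  linarith

variable (e : X →L[ℝ] Y) (p : Y →L[ℝ] X)

theorem mem_frechetSubdiff_of_mem_comp (hpe : ∀ a, p (e a) = a)
    (hdom : ∀ w, h w ≠ ⊤ → w ∈ range e) {x s : X} {v : Y} (hvs : ∀ a, ⟪v, e a⟫ = ⟪s, a⟫)
    (hs : s ∈ frechetSubdiff (h ∘ e) x) : v ∈ frechetSubdiff h (e x) := by
  obtain ⟨hT, hB, hs⟩ := hs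
  refine ⟨hT, hB, fun ε hε => ?_⟩
  have hpx : Tendsto p (𝓝 (e x)) (𝓝 x) := by simpa [hpe] using p.continuous.tendsto (e x)
  filter_upwards [hpx.eventually (hs (ε / (‖p‖ + 1)) (by positivity))] with w hw
  by_cases hwT : h w = ⊤
  · simp [hwT]
  obtain ⟨a, rfl⟩ := hdom w hwT
  rw [hpe] at hw
  rw [← map_sub, hvs]
  refine le_trans (add_le_add_right (EReal.coe_le_coe_iff.mpr ?_) _) hw
  have : ε / (‖p‖ + 1) * ‖a - x‖ ≤ ε * ‖e (a - x)‖ :=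
    calc ε / (‖p‖ + 1) * ‖a - x‖ = ε / (‖p‖ + 1) * ‖p (e (a - x))‖ := by rw [hpe]
      _ ≤ ε / (‖p‖ + 1) * ((‖p‖ + 1) * ‖e (a - x)‖) := by
          gcongr
          exact (p.le_opNorm _).trans (by nlinarith [norm_nonneg (e (a - x))])
      _ = ε * ‖e (a - x)‖ := by field_simp
  linarith

theorem mem_limitingSubdiff_comp_of_mem (hpe : ∀ a, p (e a) = a)
    (hdom : ∀ w, h w ≠ ⊤ → w ∈ range e) (A : Y →L[ℝ] X) (hA : ∀ v a, ⟪v, e a⟫ = ⟪A v, a⟫)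
    {x : X} {v : Y} (hv : v ∈ limitingSubdiff h (e x)) : A v ∈ limitingSubdiff (h ∘ e) x := by
  obtain ⟨u, w, hw, hu, hval, hwv⟩ := hv
  have hu_eq : ∀ k, e (p (u k)) = u k := fun k => by
    obtain ⟨a, ha⟩ := hdom (u k) (hw k).1
    rw [← ha, hpe]
  refine ⟨fun k => p (u k), fun k => A (w k), fun k => ?_, ?_, ?_, ?_⟩
  · exact mem_frechetSubdiff_comp_of_mem e (hA (w k)) (by rw [hu_eq]; exact hw k)
  · simpa [Function.comp_def, hpe] using (p.continuous.tendsto (e x)).comp hu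
  · simpa [Function.comp_def, hu_eq] using hval
  · exact (A.continuous.tendsto v).comp hwv

theorem mem_limitingSubdiff_of_mem_comp (hpe : ∀ a, p (e a) = a)
    (hdom : ∀ w, h w ≠ ⊤ → w ∈ range e) (B : X →L[ℝ] Y) (hB : ∀ t a, ⟪B t, e a⟫ = ⟪t, a⟫)
    {x s : X} (hs : s ∈ limitingSubdiff (h ∘ e) x) : B s ∈ limitingSubdiff h (e x) := by
  obtain ⟨y, t, ht, hy, hval, hts⟩ := hs
  exact ⟨fun k => e (y k), fun k => B (t k),
    fun k => mem_frechetSubdiff_of_mem_comp e p hpe hdom (hB (t k)) (ht k),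
    (e.continuous.tendsto x).comp hy, hval, (B.continuous.tendsto s).comp hts⟩

end Composition

theorem infDist_zero_le_mul_infDist_zero {X Y : Type*} [SeminormedAddCommGroup X]
    [SeminormedAddCommGroup Y] {S : Set Y} {T : Set X} (A : Y → X) {K : ℝ} (hK : 0 ≤ K)
    (hA : ∀ v, ‖A v‖ ≤ K * ‖v‖) (hST : MapsTo A S T) (hTS : T.Nonempty → S.Nonempty) :
    infDist 0 T ≤ K * infDist 0 S := by
  rcases S.eq_empty_or_nonempty with rfl | hS
  · rw [not_nonempty_iff_eq_empty.mp (mt hTS not_nonempty_empty)]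
    simp
  have : Nonempty S := hS.to_subtype
  rw [infDist_eq_iInf (s := S), Real.mul_iInf_of_nonneg hK]
  refine le_ciInf fun ⟨v, hv⟩ => ?_
  simpa using (infDist_le_dist_of_mem (x := (0 : X)) (hST hv)).trans (by simpa using hA v)

section Consensus

variable (N : ℕ) (H : Type*) [NormedAddCommGroup H] [InnerProductSpace ℝ H]

def consensusEmbedding : H →L[ℝ] PiLp 2 (fun _ : Fin N => H) :=
  (PiLp.continuousLinearEquiv 2 ℝ (fun _ : Fin N => H)).symm.toContinuousLinearMap ∘L
    ContinuousLinearMap.pi fun _ => ContinuousLinearMap.id ℝ H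

def blockSum : PiLp 2 (fun _ : Fin N => H) →L[ℝ] H :=
  ∑ i, PiLp.proj 2 (fun _ : Fin N => H) i

variable {N H}

@[simp]
theorem consensusEmbedding_apply (a : H) (i : Fin N) : consensusEmbedding N H a i = a := rfl

@[simp]
theorem blockSum_apply (v : PiLp 2 (fun _ : Fin N => H)) : blockSum N H v = ∑ i, v i := by
  simp [blockSum]

theorem inner_consensusEmbedding (v : PiLp 2 (fun _ : Fin N => H)) (a : H) :
    ⟪v, consensusEmbedding N H a⟫ = ⟪blockSum N H v, a⟫ := by
  simp [PiLp.inner_apply, sum_inner]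

theorem norm_blockSum_le (v : PiLp 2 (fun _ : Fin N => H)) :
    ‖blockSum N H v‖ ≤ √N * ‖v‖ := by
  have hcs : (∑ i, ‖v i‖) ^ 2 ≤ N * ∑ i, ‖v i‖ ^ 2 := by
    simpa using sq_sum_le_card_mul_sum_sq (s := Finset.univ) (f := fun i => ‖v i‖)
  calc ‖blockSum N H v‖ ≤ ∑ i, ‖v i‖ := by simpa using norm_sum_le _ _
    _ = √((∑ i, ‖v i‖) ^ 2) := (Real.sqrt_sq (by positivity)).symm
    _ ≤ √(N * ∑ i, ‖v i‖ ^ 2) := Real.sqrt_le_sqrt hcs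
    _ = √N * ‖v‖ := by rw [Real.sqrt_mul (Nat.cast_nonneg N), PiLp.norm_eq_of_L2]

theorem inner_consensusEmbedding_smul (hN : 0 < N) (t a : H) :
    ⟪consensusEmbedding N H ((N : ℝ)⁻¹ • t), consensusEmbedding N H a⟫ = ⟪t, a⟫ := by
  rw [inner_consensusEmbedding, blockSum_apply]
  simp [Finset.sum_const, ← Nat.cast_smul_eq_nsmul ℝ, smul_smul, hN.ne']

end Consensus

theorem EReal.coe_inv_natCast_mul_sum_const {N : ℕ} (hN : 0 < N) (c : EReal) :
    (((N : ℝ)⁻¹ : ℝ) : EReal) * ∑ _i : Fin N, c = c := by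
  rw [Finset.sum_const, Finset.card_univ, Fintype.card_fin, EReal.nsmul_eq_mul, ← mul_assoc,
    ← EReal.coe_coe_eq_natCast, ← EReal.coe_mul, inv_mul_cancel₀ (by positivity),
    EReal.coe_one, one_mul]

theorem EReal.coe_nonneg_mul_sum_ne_bot {ι : Type*} [Fintype ι] {r : ℝ} (hr : 0 ≤ r)
    {c : ι → EReal} (hc : ∀ i, c i ≠ ⊥) : (r : EReal) * ∑ i, c i ≠ ⊥ := by
  have hsum : ∑ i, c i ≠ ⊥ := Finset.sum_induction c (· ≠ ⊥)
    (fun _ _ ha hb => EReal.add_ne_bot_iff.mpr ⟨ha, hb⟩) EReal.zero_ne_bot fun i _ => hc i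
  rw [EReal.mul_ne_bot]
  refine ⟨Or.inl (EReal.coe_ne_bot r), Or.inr hsum, Or.inl (EReal.coe_ne_top r),
    Or.inl (EReal.coe_nonneg.mpr hr)⟩

open Classical in
theorem consensus_subdifferential_distance_bound_general {N : ℕ} (hN : 0 < N)
    {H : Type*} [NormedAddCommGroup H] [InnerProductSpace ℝ H]
    (f : Fin N → H → ℝ)
    (g : H → EReal)
    (hgbot : ∀ u, g u ≠ ⊥) :
    ∃ c : ℝ, 0 < c ∧
      ∀ x : H,
        c * Metric.infDist (0 : H)
            (limitingSubdiff (fun y : H => (((N : ℝ)⁻¹ * ∑ i, f i y : ℝ) : EReal) + g y) x)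
          ≤ Metric.infDist (0 : PiLp 2 (fun _ : Fin N => H))
            (limitingSubdiff
              (fun w : PiLp 2 (fun _ : Fin N => H) =>
                (((N : ℝ)⁻¹ * ∑ i, f i (w i) : ℝ) : EReal)
                  + (((N : ℝ)⁻¹ : ℝ) : EReal) * (∑ i, g (w i))
                  + (if ∀ i j : Fin N, w i = w j then (0 : EReal) else ⊤))
              (WithLp.toLp 2 (fun _ => x))) := by
  set Φ : PiLp 2 (fun _ : Fin N => H) → EReal := fun w =>
    (((N : ℝ)⁻¹ * ∑ i, f i (w i) : ℝ) : EReal) + (((N : ℝ)⁻¹ : ℝ) : EReal) * (∑ i, g (w i))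
      + (if ∀ i j : Fin N, w i = w j then (0 : EReal) else ⊤)
  set e := consensusEmbedding N H
  have hΦe : Φ ∘ e = fun y => (((N : ℝ)⁻¹ * ∑ i, f i y : ℝ) : EReal) + g y := by
    ext y
    simp only [Φ, e, Function.comp_apply, consensusEmbedding_apply, implies_true, if_true,
      add_zero, EReal.coe_inv_natCast_mul_sum_const hN]
  have hdom : ∀ w, Φ w ≠ ⊤ → w ∈ range e := by
    intro w hw
    by_cases hcons : ∀ i j : Fin N, w i = w j
    · exact ⟨w ⟨0, hN⟩, PiLp.ext fun i => (hcons i ⟨0, hN⟩).symm⟩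
    · refine absurd ?_ hw
      simp only [Φ, if_neg hcons]
      exact EReal.add_top_of_ne_bot (EReal.add_ne_bot_iff.mpr ⟨EReal.coe_ne_bot _,
        EReal.coe_nonneg_mul_sum_ne_bot (by positivity) fun i => hgbot (w i)⟩)
  have hpe : ∀ a, PiLp.proj 2 (𝕜 := ℝ) (fun _ : Fin N => H) ⟨0, hN⟩ (e a) = a := fun _ => rfl
  have hsqrt : 0 < √(N : ℝ) := Real.sqrt_pos.mpr (by exact_mod_cast hN)
  refine ⟨(√N)⁻¹, inv_pos.mpr hsqrt, fun x => ?_⟩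
  rw [inv_mul_le_iff₀ hsqrt, ← hΦe]
  refine infDist_zero_le_mul_infDist_zero (blockSum N H) hsqrt.le norm_blockSum_le
    (fun v hv => mem_limitingSubdiff_comp_of_mem e _ hpe hdom _ inner_consensusEmbedding hv)
    fun ⟨s, hs⟩ => ⟨_, mem_limitingSubdiff_of_mem_comp e _ hpe hdom
      (e ∘L ((N : ℝ)⁻¹ • ContinuousLinearMap.id ℝ H))
      (fun t a => inner_consensusEmbedding_smul hN t a) hs⟩

open Classical in
/-- key inequality in Corollary 4.5: there is c > 0 such that
dist(0, ∂Φ(x,…,x)) ≥ c·dist(0, ∂φ(x)) for all x, where φ = (1/N)∑fᵢ + g on H and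
Φ = (1/N)∑fᵢ(xᵢ) + (1/N)∑g(xᵢ) + δ_C on the product space, ∂ the limiting subdifferential. -/
theorem consensus_subdifferential_distance_bound {N : ℕ} (hN : 0 < N)
    {H : Type*} [NormedAddCommGroup H] [InnerProductSpace ℝ H]
    (f : Fin N → H → ℝ) (hf : ∀ i, Differentiable ℝ (f i))
    (g : H → EReal) (hglsc : LowerSemicontinuous g)
    (hgproper : ∃ u, g u ≠ ⊤) (hgbot : ∀ u, g u ≠ ⊥)
    (hgconv : ERealConvex g) :
    ∃ c : ℝ, 0 < c ∧
      ∀ x : H,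
        c * Metric.infDist (0 : H)
            (limitingSubdiff (fun y : H => (((N : ℝ)⁻¹ * ∑ i, f i y : ℝ) : EReal) + g y) x)
          ≤ Metric.infDist (0 : PiLp 2 (fun _ : Fin N => H))
            (limitingSubdiff
              (fun w : PiLp 2 (fun _ : Fin N => H) =>
                (((N : ℝ)⁻¹ * ∑ i, f i (w i) : ℝ) : EReal)
                  + (((N : ℝ)⁻¹ : ℝ) : EReal) * (∑ i, g (w i))
                  + (if ∀ i j : Fin N, w i = w j then (0 : EReal) else ⊤))
              (WithLp.toLp 2 (fun _ => x))) :=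
  consensus_subdifferential_distance_bound_general hN f g hgbot
end
end
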